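/- The TILES set is an unextendible product basis: there is no nonzero product vector |u⟩⊗|v⟩ in ℂ^3⊗ℂ^3 orthogonal to all five TILES vectors |ψ_0⟩,…,|ψ_4⟩. -/
import Mathlib


open Matrix

/-- Standard basis vectors of `ℂ^3`. -/
noncomputable def e (i : Fin 3) : Fin 3 → ℂ := Pi.single i 1

/-- Tensor product of vectors in `ℂ^3`. -/
noncomputable def tp (u v : Fin 3 → ℂ) : Fin 3 × Fin 3 → ℂ := fun p => u p.1 * v p.2

/-- The five TILES unextendible-product-basis vectors in `ℂ^3 ⊗ ℂ^3`. -/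
noncomputable def tiles : Fin 5 → (Fin 3 × Fin 3 → ℂ)
  | 0 => ((Real.sqrt 2 : ℂ))⁻¹ • tp (e 0) (e 0 - e 1)
  | 1 => ((Real.sqrt 2 : ℂ))⁻¹ • tp (e 0 - e 1) (e 2)
  | 2 => ((Real.sqrt 2 : ℂ))⁻¹ • tp (e 2) (e 1 - e 2)
  | 3 => ((Real.sqrt 2 : ℂ))⁻¹ • tp (e 1 - e 2) (e 0)
  | 4 => (3 : ℂ)⁻¹ • tp (e 0 + e 1 + e 2) (e 0 + e 1 + e 2)

private lemma vz {a : Fin 3 → ℂ} (h0 : a 0 = 0) (h1 : a 1 = 0) (h2 : a 2 = 0) : a = 0 := by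
  funext i
  fin_cases i <;> simpa using ‹_›

private lemma t012 {a : Fin 3 → ℂ} (h0 : a 0 = 0) (h1 : a 0 - a 1 = 0) (h2 : a 2 = 0) :
    a = 0 :=
  vz h0 (by linear_combination h0 - h1) h2

private lemma t013 {a : Fin 3 → ℂ} (h0 : a 0 = 0) (h1 : a 0 - a 1 = 0) (h3 : a 1 - a 2 = 0) :
    a = 0 :=
  vz h0 (by linear_combination h0 - h1) (by linear_combination h0 - h1 - h3)

private lemma t014 {a : Fin 3 → ℂ} (h0 : a 0 = 0) (h1 : a 0 - a 1 = 0)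
    (h4 : a 0 + a 1 + a 2 = 0) : a = 0 :=
  vz h0 (by linear_combination h0 - h1) (by linear_combination h4 - 2 * h0 + h1)

private lemma t023 {a : Fin 3 → ℂ} (h0 : a 0 = 0) (h2 : a 2 = 0) (h3 : a 1 - a 2 = 0) :
    a = 0 :=
  vz h0 (by linear_combination h3 + h2) h2

private lemma t024 {a : Fin 3 → ℂ} (h0 : a 0 = 0) (h2 : a 2 = 0)
    (h4 : a 0 + a 1 + a 2 = 0) : a = 0 :=
  vz h0 (by linear_combination h4 - h0 - h2) h2

private lemma t034 {a : Fin 3 → ℂ} (h0 : a 0 = 0) (h3 : a 1 - a 2 = 0)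
    (h4 : a 0 + a 1 + a 2 = 0) : a = 0 :=
  vz h0 (by linear_combination (h4 - h0 + h3) / 2) (by linear_combination (h4 - h0 - h3) / 2)

private lemma t123 {a : Fin 3 → ℂ} (h1 : a 0 - a 1 = 0) (h2 : a 2 = 0) (h3 : a 1 - a 2 = 0) :
    a = 0 :=
  vz (by linear_combination h1 + h3 + h2) (by linear_combination h3 + h2) h2

private lemma t124 {a : Fin 3 → ℂ} (h1 : a 0 - a 1 = 0) (h2 : a 2 = 0)
    (h4 : a 0 + a 1 + a 2 = 0) : a = 0 :=
  vz (by linear_combination (h4 - h2 + h1) / 2) (by linear_combination (h4 - h2 - h1) / 2) h2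

private lemma t134 {a : Fin 3 → ℂ} (h1 : a 0 - a 1 = 0) (h3 : a 1 - a 2 = 0)
    (h4 : a 0 + a 1 + a 2 = 0) : a = 0 :=
  vz (by linear_combination (h4 + 2 * h1 + h3) / 3) (by linear_combination (h4 - h1 + h3) / 3)
    (by linear_combination (h4 - h1 - 2 * h3) / 3)

private lemma t234 {a : Fin 3 → ℂ} (h2 : a 2 = 0) (h3 : a 1 - a 2 = 0)
    (h4 : a 0 + a 1 + a 2 = 0) : a = 0 :=
  vz (by linear_combination h4 - h3 - 2 * h2) (by linear_combination h3 + h2) h2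

/-- the TILES set is an unextendible product basis: no nonzero product
vector `u ⊗ v` in `ℂ^3 ⊗ ℂ^3` is orthogonal to all five TILES vectors. -/
theorem tiles_unextendible :
    ¬ ∃ (u v : Fin 3 → ℂ), u ≠ 0 ∧ v ≠ 0 ∧ ∀ i : Fin 5, star (tiles i) ⬝ᵥ tp u v = 0 := by
  rintro ⟨u, v, hu, hv, h⟩
  have h0 := h 0; have h1 := h 1; have h2 := h 2; have h3 := h 3; have h4 := h 4
  simp [tiles, tp, e, dotProduct, Fin.sum_univ_succ, Fintype.sum_prod_type,
    Pi.single_apply] at h0 h1 h2 h3 h4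
  have s2 : ((Real.sqrt 2 : ℝ) : ℂ) ≠ 0 := by
    simp [Real.sqrt_eq_zero']
  have e0 : u 0 * (v 0 - v 1) = 0 := by
    field_simp at h0
    linear_combination h0
  have e1 : (u 0 - u 1) * v 2 = 0 := by
    field_simp at h1
    linear_combination h1
  have e2 : u 2 * (v 1 - v 2) = 0 := by
    field_simp at h2
    linear_combination h2
  have e3 : (u 1 - u 2) * v 0 = 0 := by
    field_simp at h3
    linear_combination h3
  have e4 : (u 0 + u 1 + u 2) * (v 0 + v 1 + v 2) = 0 := by
    linear_combination (3 : ℂ) * h4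
  rcases mul_eq_zero.mp e0 with c0 | c0 <;>
  rcases mul_eq_zero.mp e1 with c1 | c1 <;>
  rcases mul_eq_zero.mp e2 with c2 | c2 <;>
  rcases mul_eq_zero.mp e3 with c3 | c3 <;>
  rcases mul_eq_zero.mp e4 with c4 | c4 <;>
  first
  | exact hu (t012 c0 c1 c2)
  | exact hu (t013 c0 c1 c3)
  | exact hu (t014 c0 c1 c4)
  | exact hu (t023 c0 c2 c3)
  | exact hu (t024 c0 c2 c4)
  | exact hu (t034 c0 c3 c4)
  | exact hu (t123 c1 c2 c3)
  | exact hu (t124 c1 c2 c4)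
  | exact hu (t134 c1 c3 c4)
  | exact hu (t234 c2 c3 c4)
  | exact hv (t012 c3 c0 c1)
  | exact hv (t013 c3 c0 c2)
  | exact hv (t014 c3 c0 c4)
  | exact hv (t023 c3 c1 c2)
  | exact hv (t024 c3 c1 c4)
  | exact hv (t034 c3 c2 c4)
  | exact hv (t123 c0 c1 c2)
  | exact hv (t124 c0 c1 c4)
  | exact hv (t134 c0 c2 c4)
  | exact hv (t234 c1 c2 c4)
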